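/- In LR-Subtraction Nim with removable set S = ℤ≥2 (all integers ≥ 2), for every n ≥ 3 we have O_S(n) = N; that is, N-positions persist forever. -/
import Mathlib


open scoped Classical

inductive Outcome : Type
  | L | R | N | P
deriving DecidableEq

/-- Outcome determined from the set of outcomes of the options of a non-terminal position. -/
noncomputable def fromOptions (T : Set Outcome) : Outcome :=
  if Outcome.L ∈ T ∧ T ⊆ {Outcome.L, Outcome.N} then Outcome.L
  else if Outcome.R ∈ T ∧ T ⊆ {Outcome.R, Outcome.N} then Outcome.R
  else if T = {Outcome.N} then Outcome.P
  else Outcome.N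

/-- Outcome of Ending Partizan Subtraction Nim with removable set `S ⊆ ℤ≥2` and
terminal assignment `W`. -/
noncomputable def epOutcome (S : Set ℕ) (hS : ∀ s ∈ S, 2 ≤ s) (W : ℕ → Outcome) : ℕ → Outcome :=
  fun n => Nat.strongRecOn n (fun n ih =>
    if ∃ s ∈ S, s ≤ n then
      fromOptions {o | ∃ s, ∃ hs : s ∈ S, ∃ hsn : s ≤ n,
        o = ih (n - s) (by have := hS s hs; omega)}
    else W n)

/-- Outcome of `LR`-Subtraction Nim: at a terminal position, Left wins if the number of
remaining tokens is even, Right wins if it is odd. -/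
noncomputable def lrOutcome (S : Set ℕ) (hS : ∀ s ∈ S, 2 ≤ s) : ℕ → Outcome :=
  epOutcome S hS (fun n => if Even n then Outcome.L else Outcome.R)

lemma epOutcome_eq (S : Set ℕ) (hS : ∀ s ∈ S, 2 ≤ s) (W : ℕ → Outcome) (n : ℕ) :
    epOutcome S hS W n =
      if ∃ s ∈ S, s ≤ n then
        fromOptions {o | ∃ s, ∃ _ : s ∈ S, ∃ _ : s ≤ n, o = epOutcome S hS W (n - s)}
      else W n := by
  conv_lhs => rw [epOutcome, Nat.strongRecOn_eq]
  rfl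

theorem stmt7 (S : Set ℕ) (hSdef : S = {k : ℕ | 2 ≤ k}) (hS : ∀ s ∈ S, 2 ≤ s)
    (n : ℕ) (hn : 3 ≤ n) :
    lrOutcome S hS n = Outcome.N := by
  subst hSdef
  have h0 : lrOutcome {k : ℕ | 2 ≤ k} hS 0 = Outcome.L := by
    rw [lrOutcome, epOutcome_eq]
    rw [if_neg (by rintro ⟨s, hs, hs'⟩; simp at hs; omega)]
    simp
  have h1 : lrOutcome {k : ℕ | 2 ≤ k} hS 1 = Outcome.R := by
    rw [lrOutcome, epOutcome_eq]
    rw [if_neg (by rintro ⟨s, hs, hs'⟩; simp at hs; omega)]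
    simp
  rw [lrOutcome, epOutcome_eq, if_pos ⟨2, by simp, by omega⟩]
  set T : Set Outcome := {o | ∃ s, ∃ _ : s ∈ {k : ℕ | 2 ≤ k}, ∃ _ : s ≤ n,
      o = epOutcome {k : ℕ | 2 ≤ k} hS (fun m => if Even m then Outcome.L else Outcome.R) (n - s)} with hT
  have hL : Outcome.L ∈ T := by
    refine ⟨n, by simpa using (by omega : 2 ≤ n), le_refl n, ?_⟩
    simp only [Nat.sub_self]
    exact h0.symm
  have hR : Outcome.R ∈ T := by
    refine ⟨n - 1, by simp; omega, by omega, ?_⟩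
    have : n - (n - 1) = 1 := by omega
    rw [this]; exact h1.symm
  rw [fromOptions]
  rw [if_neg (by rintro ⟨_, hsub⟩; have := hsub hR; simp at this)]
  rw [if_neg (by rintro ⟨_, hsub⟩; have := hsub hL; simp at this)]
  rw [if_neg (by intro h; rw [h] at hL; simp at hL)]
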